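/- Let G be a finite group, N a normal abelian subgroup of G of odd order, such that every Cayley graph Cay(G,S) with |S| ≤ k is integral. Then every Cayley graph over G/N with connection set of size at most k is integral. -/

import Mathlib

/-- The Cayley graph of a group `G` with connection set `S`. For a symmetric set `S`
with `1 ∉ S`, `g` and `h` are adjacent iff `h * g⁻¹ ∈ S`. -/
def cayley {G : Type*} [Group G] (S : Set G) : SimpleGraph G :=
  SimpleGraph.fromRel (fun g h => h * g⁻¹ ∈ S)

/-- A finite graph is integral if all eigenvalues of its adjacency matrix are integers. -/
def IsIntegralGraph {V : Type*} [Finite V] (Γ : SimpleGraph V) : Prop :=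
  letI := Fintype.ofFinite V
  letI := Classical.decEq V
  letI : DecidableRel Γ.Adj := Classical.decRel _
  ∀ μ ∈ spectrum ℝ (Γ.adjMatrix ℝ), ∃ z : ℤ, (z : ℝ) = μ

/-- `μ` is an eigenvalue of the adjacency matrix of the finite graph `Γ`. -/
def IsAdjEigenvalue {V : Type*} [Finite V] (Γ : SimpleGraph V) (μ : ℝ) : Prop :=
  letI := Fintype.ofFinite V
  letI := Classical.decEq V
  letI : DecidableRel Γ.Adj := Classical.decRel _
  μ ∈ spectrum ℝ (Γ.adjMatrix ℝ)

/-!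
Since `N` has odd order, an involution `x = gN` of `G ⧸ N` lifts to the involution `g ^ |N|`
of `G`; hence the projection `G → G ⧸ N` has a section `L` with `L x⁻¹ = (L x)⁻¹`. For a
symmetric `S ⊆ G ⧸ N` avoiding `1`, the set `L(S)` is then a symmetric subset of `G` of the same
size avoiding `1`, and the neighbours `t g` (`t ∈ L(S)`) of `g` in `Cay(G, L(S))` map bijectively
onto the neighbours of `gN` in `Cay(G ⧸ N, S)`. So every eigenvector `v` of `Cay(G ⧸ N, S)` pulls
back to an eigenvector `v ∘ π` of `Cay(G, L(S))` with the same eigenvalue.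
-/

open scoped Matrix

theorem Matrix.mem_spectrum_iff_exists_mulVec_eq_smul {n K : Type*} [Fintype n] [DecidableEq n]
    [Field K] (M : Matrix n n K) (μ : K) :
    μ ∈ spectrum K M ↔ ∃ v : n → K, v ≠ 0 ∧ M *ᵥ v = μ • v := by
  rw [← Matrix.spectrum_toLin', ← Module.End.hasEigenvalue_iff_mem_spectrum,
    Module.End.hasEigenvalue_iff, Submodule.ne_bot_iff]
  simp only [Module.End.mem_eigenspace_iff, Matrix.toLin'_apply]
  exact exists_congr fun v => and_comm

theorem isAdjEigenvalue_iff {V : Type*} [Fintype V] [DecidableEq V] (Γ : SimpleGraph V)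
    [DecidableRel Γ.Adj] (μ : ℝ) :
    IsAdjEigenvalue Γ μ ↔ ∃ v : V → ℝ, v ≠ 0 ∧ Γ.adjMatrix ℝ *ᵥ v = μ • v := by
  unfold IsAdjEigenvalue
  convert Matrix.mem_spectrum_iff_exists_mulVec_eq_smul (Γ.adjMatrix ℝ) μ using 2
  congr!

theorem QuotientGroup.exists_mk_eq_of_inv_eq_self {G : Type*} [Group G] (N : Subgroup G)
    [N.Normal] (hodd : Odd (Nat.card N)) {x : G ⧸ N} (hx : x⁻¹ = x) :
    ∃ t : G, (t : G ⧸ N) = x ∧ t⁻¹ = t := by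
  have hx2 : x * x = 1 := inv_eq_iff_mul_eq_one.1 hx
  obtain ⟨g, rfl⟩ := QuotientGroup.mk_surjective x
  have hsq : g ^ 2 ∈ N := by rwa [← QuotientGroup.eq_one_iff, QuotientGroup.mk_pow, sq]
  refine ⟨g ^ Nat.card N, ?_, ?_⟩
  · obtain ⟨j, hj⟩ := hodd
    rw [QuotientGroup.mk_pow, hj, pow_succ, pow_mul, sq, hx2, one_pow, one_mul]
  · rw [inv_eq_iff_mul_eq_one, ← sq, ← pow_mul, mul_comm, pow_mul]
    exact congrArg Subtype.val (pow_card_eq_one' (x := (⟨g ^ 2, hsq⟩ : N)))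

theorem MonoidHom.exists_section_map_inv {G Q : Type*} [Group G] [Group Q] (f : G →* Q)
    (hf : Function.Surjective f) (hlift : ∀ x : Q, x⁻¹ = x → ∃ t, f t = x ∧ t⁻¹ = t) :
    ∃ L : Q → G, (∀ x, f (L x) = x) ∧ ∀ x, L x⁻¹ = (L x)⁻¹ := by
  classical
  -- the order only serves to pick one element of each pair `{x, x⁻¹}` with `x⁻¹ ≠ x`
  let : LinearOrder Q := IsWellOrder.linearOrder WellOrderingRel
  choose t hft ht using hlift
  let L : Q → G := fun x =>
    if hx : x⁻¹ = x then t x hx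
    else if x ≤ x⁻¹ then Function.surjInv hf x else (Function.surjInv hf x⁻¹)⁻¹
  refine ⟨L, fun x => ?_, fun x => ?_⟩
  · simp only [L]
    split_ifs with hx
    · exact hft x hx
    · exact Function.surjInv_eq hf x
    · rw [map_inv, Function.surjInv_eq hf, inv_inv]
  · by_cases hx : x⁻¹ = x
    · simp only [L, hx, dif_pos hx, ht]
    rcases lt_or_gt_of_ne (Ne.symm hx) with hlt | hlt <;>
      simp [L, hx, Ne.symm hx, hlt.le, hlt.not_ge]

section Cayley

variable {G : Type*} [Group G]

theorem cayley_adj_iff {S : Set G} (h1 : (1 : G) ∉ S) (hS : ∀ s ∈ S, s⁻¹ ∈ S) {g h : G} :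
    (cayley S).Adj g h ↔ h * g⁻¹ ∈ S := by
  rw [cayley, SimpleGraph.fromRel_adj]
  constructor
  · rintro ⟨-, hgh | hhg⟩
    · exact hgh
    · simpa using hS _ hhg
  · exact fun hgh => ⟨fun hg => h1 (by simpa [hg] using hgh), Or.inl hgh⟩

theorem cayley_adjMatrix_mulVec_apply {R : Type*} [NonAssocSemiring R] [Fintype G]
    [DecidableEq G] {S : Finset G} (h1 : (1 : G) ∉ S) (hS : ∀ s ∈ S, s⁻¹ ∈ S)
    [DecidableRel (cayley (S : Set G)).Adj] (v : G → R) (g : G) :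
    ((cayley (S : Set G)).adjMatrix R *ᵥ v) g = ∑ s ∈ S, v (s * g) := by
  have hnbr : (cayley (S : Set G)).neighborFinset g = S.map (Equiv.mulRight g).toEmbedding := by
    ext h
    simp only [SimpleGraph.mem_neighborFinset, cayley_adj_iff h1 hS, Finset.mem_coe,
      Finset.mem_map_equiv, Equiv.mulRight_symm, Equiv.coe_mulRight]
  rw [SimpleGraph.adjMatrix_mulVec_apply, hnbr, Finset.sum_map]
  rfl

variable {Q : Type*} [Group Q] [DecidableEq G] {f : G →* Q} {L : Q → G} {S : Finset Q}

theorem one_notMem_image_of_section (hL : ∀ x, f (L x) = x) (h1 : (1 : Q) ∉ S) :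
    (1 : G) ∉ S.image L := by
  simp only [Finset.mem_image, not_exists, not_and]
  intro s hs hs1
  rw [← hL s, hs1, map_one] at hs
  exact h1 hs

theorem inv_mem_image_of_section (hLinv : ∀ x, L x⁻¹ = (L x)⁻¹) (hS : ∀ s ∈ S, s⁻¹ ∈ S) :
    ∀ t ∈ S.image L, t⁻¹ ∈ S.image L := by
  simp only [Finset.forall_mem_image]
  exact fun s hs => Finset.mem_image.2 ⟨s⁻¹, hS s hs, hLinv s⟩

theorem isAdjEigenvalue_cayley_image_of_section [Finite G] [Finite Q]
    (hL : ∀ x, f (L x) = x) (hLinv : ∀ x, L x⁻¹ = (L x)⁻¹) (h1 : (1 : Q) ∉ S)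
    (hS : ∀ s ∈ S, s⁻¹ ∈ S) {μ : ℝ} (hμ : IsAdjEigenvalue (cayley (S : Set Q)) μ) :
    IsAdjEigenvalue (cayley ((S.image L : Finset G) : Set G)) μ := by
  classical
  have := Fintype.ofFinite G
  have := Fintype.ofFinite Q
  rw [isAdjEigenvalue_iff] at hμ ⊢
  obtain ⟨v, hv, hvμ⟩ := hμ
  refine ⟨v ∘ f, fun hvf => hv (funext fun x => by simpa [hL] using congrFun hvf (L x)), ?_⟩
  funext g
  have hLinj : Function.Injective L := Function.LeftInverse.injective hL
  rw [cayley_adjMatrix_mulVec_apply (one_notMem_image_of_section hL h1)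
    (inv_mem_image_of_section hLinv hS), Finset.sum_image hLinj.injOn]
  simp only [Function.comp_apply, map_mul, hL]
  rw [← cayley_adjMatrix_mulVec_apply h1 hS, hvμ]
  rfl

end Cayley

theorem quotient_by_odd_abelian_normal_general (G : Type*) [Group G] [Finite G] (k : ℕ)
    (hG : ∀ S : Finset G, (1 : G) ∉ S → (∀ s ∈ S, s⁻¹ ∈ S) → S.card ≤ k →
      IsIntegralGraph (cayley (S : Set G)))
    (N : Subgroup G) [N.Normal]
    (hodd : Odd (Nat.card N)) :
    ∀ S : Finset (G ⧸ N), (1 : G ⧸ N) ∉ S → (∀ s ∈ S, s⁻¹ ∈ S) → S.card ≤ k →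
      IsIntegralGraph (cayley (S : Set (G ⧸ N))) := by
  classical
  intro S h1 hS hk μ hμ
  obtain ⟨L, hL, hLinv⟩ := (QuotientGroup.mk' N).exists_section_map_inv
    (QuotientGroup.mk'_surjective N) fun _ hx => QuotientGroup.exists_mk_eq_of_inv_eq_self N hodd hx
  exact hG (S.image L) (one_notMem_image_of_section hL h1) (inv_mem_image_of_section hLinv hS)
    (Finset.card_image_le.trans hk) μ (isAdjEigenvalue_cayley_image_of_section hL hLinv h1 hS hμ)

theorem quotient_by_odd_abelian_normal (G : Type*) [Group G] [Finite G] (k : ℕ)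
    (hG : ∀ S : Finset G, (1 : G) ∉ S → (∀ s ∈ S, s⁻¹ ∈ S) → S.card ≤ k →
      IsIntegralGraph (cayley (S : Set G)))
    (N : Subgroup G) [N.Normal]
    (hab : ∀ a b : G, a ∈ N → b ∈ N → a * b = b * a)
    (hodd : Odd (Nat.card N)) :
    ∀ S : Finset (G ⧸ N), (1 : G ⧸ N) ∉ S → (∀ s ∈ S, s⁻¹ ∈ S) → S.card ≤ k →
      IsIntegralGraph (cayley (S : Set (G ⧸ N))) :=
  quotient_by_odd_abelian_normal_general G k hG N hodd
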